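/- Theorem 3.1 (characterization of eigenvalues). Let λ ∈ ℂ. The following are equivalent: (i) there exists a function f : [0,2π] → ℂ, not identically zero, which is absolutely continuous with derivative f′, satisfies the boundary condition f(0) = ρ f(2π), and satisfies i f′(x) + V(x) f(x) + f(2π) k(x) = λ f(x) for almost every x ∈ (0,2π); (ii) the eigenvalue equation e^{i ∫₀^{2π} (V(t) − λ) dt} · ( i ∫₀^{2π} e^{−i ∫₀^{t} (V(s) − λ) ds} k(t) dt + ρ ) = 1 holds. -/

import Mathlib

open MeasureTheory Real Complex

/-- `f : [0,2π] → ℂ` is absolutely continuous with derivative `f'`: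
`f' ∈ L¹(0,2π)` and `f x = f 0 + ∫₀ˣ f'` for all `x ∈ [0,2π]`. -/
def IsACWithDeriv (f f' : ℝ → ℂ) : Prop :=
  MeasureTheory.IntegrableOn f' (Set.Ioc 0 (2 * Real.pi)) ∧
    ∀ x ∈ Set.Icc (0:ℝ) (2 * Real.pi), f x = f 0 + ∫ t in (0:ℝ)..x, f' t

/-!
Put `a = i (V - λ)` and `W x = ∫₀ˣ a`. Condition (i) says that `f` solves the linear equation
`f' = a f + f(2π) i k` with `f(0) = ρ f(2π)`. Absolutely continuous functions obey the product and
chain rules in integrated form: both sides of each rule are absolutely continuous with the same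
derivative almost everywhere (Lebesgue differentiation), and an absolutely continuous function with
almost everywhere vanishing derivative is constant. Hence `e^{-W} f` has derivative
`f(2π) e^{-W} i k`, i.e. `f` is given by variation of constants. At `x = 2π` this gives (ii) once
`f(2π) ≠ 0`, and `f(2π) = 0` would force `f = 0`. Conversely, the variation-of-constants solution
with `f(0) = ρ` satisfies `f(2π) = 1` precisely when (ii) holds.
-/

open Set Filter

namespace AbsolutelyContinuousOnInterval

variable {X Y : Type*} [PseudoMetricSpace X] [PseudoMetricSpace Y] {a b : ℝ}

theorem of_dist_le {f : ℝ → X} {g : ℝ → Y} (K : ℝ)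
    (hg : AbsolutelyContinuousOnInterval g a b)
    (hfg : ∀ x ∈ uIcc a b, ∀ y ∈ uIcc a b, dist (f x) (f y) ≤ K * dist (g x) (g y)) :
    AbsolutelyContinuousOnInterval f a b := by
  unfold AbsolutelyContinuousOnInterval at hg ⊢
  refine squeeze_zero' (.of_forall fun _ ↦ Finset.sum_nonneg fun _ _ ↦ dist_nonneg) ?_
    (by simpa using hg.const_mul K)
  rw [eventually_inf_principal]
  filter_upwards with E hE
  rw [Finset.mul_sum]
  gcongr with i hi
  exact hfg _ (hE.1 i hi).1 _ (hE.1 i hi).2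

theorem _root_.LocallyLipschitz.comp_absolutelyContinuousOnInterval {E : Type*}
    [SeminormedAddCommGroup E] {f : ℝ → E} {g : E → Y} (hg : LocallyLipschitz g)
    (hf : AbsolutelyContinuousOnInterval f a b) :
    AbsolutelyContinuousOnInterval (g ∘ f) a b := by
  have hcpt : IsCompact (f '' uIcc a b) := isCompact_uIcc.image_of_continuousOn hf.continuousOn
  obtain ⟨K, hK⟩ := hg.locallyLipschitzOn.exists_lipschitzOnWith_of_compact hcpt
  exact hf.of_dist_le K fun x hx y hy ↦
    hK.dist_le_mul _ (mem_image_of_mem f hx) _ (mem_image_of_mem f hy)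

end AbsolutelyContinuousOnInterval

theorem IntervalIntegrable.absolutelyContinuousOnInterval_primitive
    {E : Type*} [NormedAddCommGroup E] [NormedSpace ℝ E] {f : ℝ → E} {a b c : ℝ}
    (h : IntervalIntegrable f volume a b) (hc : c ∈ uIcc a b) :
    AbsolutelyContinuousOnInterval (fun x ↦ ∫ v in c..x, f v) a b := by
  refine (h.norm.absolutelyContinuousOnInterval_intervalIntegral hc).of_dist_le 1
    fun x hx y hy ↦ ?_
  have hi : ∀ z ∈ uIcc a b, IntervalIntegrable f volume c z :=
    fun z hz ↦ h.mono_set (uIcc_subset_uIcc hc hz)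
  rw [one_mul, dist_eq_norm, dist_eq_norm,
    intervalIntegral.integral_interval_sub_left (hi x hx) (hi y hy),
    intervalIntegral.integral_interval_sub_left (hi x hx).norm (hi y hy).norm, Real.norm_eq_abs]
  exact intervalIntegral.norm_integral_le_abs_integral_norm

section

variable {E : Type*} [NormedAddCommGroup E] [NormedSpace ℝ E]

/-- `IsACWithDeriv f f'` is `IsACWithDerivOn f f' 0 (2 * π)` by definition. -/
def IsACWithDerivOn (f f' : ℝ → E) (a b : ℝ) : Prop :=
  IntegrableOn f' (Ioc a b) ∧ ∀ x ∈ Icc a b, f x = f a + ∫ t in a..x, f' t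

theorem isACWithDerivOn_intervalIntegral {g : ℝ → E} {a b : ℝ}
    (hg : IntegrableOn g (Ioc a b)) :
    IsACWithDerivOn (fun x ↦ ∫ t in a..x, g t) g a b :=
  ⟨hg, fun _ _ ↦ by simp⟩

namespace IsACWithDerivOn

section

variable {f f' g' : ℝ → E} {a b : ℝ}

theorem intervalIntegrable (hf : IsACWithDerivOn f f' a b) (hab : a ≤ b) :
    IntervalIntegrable f' volume a b :=
  (intervalIntegrable_iff_integrableOn_Ioc_of_le hab).2 hf.1

theorem absolutelyContinuousOnInterval (hf : IsACWithDerivOn f f' a b) (hab : a ≤ b) :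
    AbsolutelyContinuousOnInterval f a b := by
  refine ((hf.intervalIntegrable hab).absolutelyContinuousOnInterval_primitive
    left_mem_uIcc).of_dist_le 1 fun x hx y hy ↦ ?_
  rw [uIcc_of_le hab] at hx hy
  rw [hf.2 x hx, hf.2 y hy, dist_add_left, one_mul]

theorem continuousOn (hf : IsACWithDerivOn f f' a b) (hab : a ≤ b) :
    ContinuousOn f (Icc a b) :=
  uIcc_of_le hab ▸ (hf.absolutelyContinuousOnInterval hab).continuousOn

theorem ae_hasDerivAt [CompleteSpace E] (hf : IsACWithDerivOn f f' a b) (hab : a ≤ b) :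
    ∀ᵐ x, x ∈ Ioo a b → HasDerivAt f (f' x) x := by
  filter_upwards [(hf.intervalIntegrable hab).ae_hasDerivAt_integral] with x hx hxab
  have hx' : x ∈ uIcc a b := by rw [uIcc_of_le hab]; exact Ioo_subset_Icc_self hxab
  refine ((hx hx' a left_mem_uIcc).const_add (f a)).congr_of_eventuallyEq ?_
  filter_upwards [Icc_mem_nhds hxab.1 hxab.2] with y hy using hf.2 y hy

theorem of_ae_hasDerivAt [CompleteSpace E] (hab : a ≤ b)
    (hf : AbsolutelyContinuousOnInterval f a b) (hf' : IntegrableOn f' (Ioc a b))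
    (hd : ∀ᵐ x, x ∈ Ioo a b → HasDerivAt f (f' x) x) :
    IsACWithDerivOn f f' a b := by
  have hi : IntervalIntegrable f' volume a b :=
    (intervalIntegrable_iff_integrableOn_Ioc_of_le hab).2 hf'
  have hG := hf.sub (hi.absolutelyContinuousOnInterval_primitive left_mem_uIcc)
  have hG' : ∀ᵐ x, x ∈ uIcc a b → HasDerivAt (f - fun x ↦ ∫ t in a..x, f' t) 0 x := by
    filter_upwards [hd, hi.ae_hasDerivAt_integral, Ioo_ae_eq_Icc.mem_iff]
      with x hfx hIx hx hxab
    rw [uIcc_of_le hab] at hxab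
    simpa using (hfx (hx.2 hxab)).sub (hIx (uIcc_of_le hab ▸ hxab) a left_mem_uIcc)
  obtain ⟨C, hC⟩ := hG.const_of_ae_hasDerivAt_zero hG'
  refine ⟨hf', fun x hx ↦ ?_⟩
  have := (hC x (uIcc_of_le hab ▸ hx)).trans (hC a left_mem_uIcc).symm
  simp only [Pi.sub_apply, intervalIntegral.integral_same, sub_zero] at this
  rw [← this, sub_add_cancel]

theorem congr_ae (hf : IsACWithDerivOn f f' a b) (h : f' =ᵐ[volume.restrict (Ioc a b)] g') :
    IsACWithDerivOn f g' a b := by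
  refine ⟨hf.1.congr h, fun x hx ↦ ?_⟩
  rw [hf.2 x hx, intervalIntegral.integral_congr_ae]
  rw [EventuallyEq, ae_restrict_iff' measurableSet_Ioc] at h
  filter_upwards [h] with t ht htx
  rw [uIoc_of_le hx.1] at htx
  exact ht (Ioc_subset_Ioc_right hx.2 htx)

theorem neg (hf : IsACWithDerivOn f f' a b) :
    IsACWithDerivOn (fun x ↦ -f x) (fun t ↦ -f' t) a b :=
  ⟨hf.1.neg, fun x hx ↦ by dsimp only; rw [hf.2 x hx, intervalIntegral.integral_neg, neg_add]⟩

theorem const_add (hf : IsACWithDerivOn f f' a b) (c : E) :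
    IsACWithDerivOn (fun x ↦ c + f x) f' a b :=
  ⟨hf.1, fun x hx ↦ by dsimp only; rw [hf.2 x hx, add_assoc]⟩

end

section

variable {𝕜 : Type*} [RCLike 𝕜] {f g f' g' : ℝ → 𝕜} {a b : ℝ}

theorem const_mul (hf : IsACWithDerivOn f f' a b) (c : 𝕜) :
    IsACWithDerivOn (fun x ↦ c * f x) (fun t ↦ c * f' t) a b :=
  ⟨hf.1.const_mul c, fun x hx ↦ by
    dsimp only
    rw [hf.2 x hx, intervalIntegral.integral_const_mul, mul_add]⟩

theorem mul (hf : IsACWithDerivOn f f' a b) (hg : IsACWithDerivOn g g' a b) (hab : a ≤ b) :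
    IsACWithDerivOn (fun x ↦ f x * g x) (fun t ↦ f' t * g t + f t * g' t) a b := by
  have hf'Icc := (integrableOn_Icc_iff_integrableOn_Ioc).2 hf.1
  have hg'Icc := (integrableOn_Icc_iff_integrableOn_Ioc).2 hg.1
  refine of_ae_hasDerivAt hab
    ((hf.absolutelyContinuousOnInterval hab).fun_smul (hg.absolutelyContinuousOnInterval hab))
    (((hf'Icc.mul_continuousOn (hg.continuousOn hab) isCompact_Icc).add
      (hg'Icc.continuousOn_mul (hf.continuousOn hab) isCompact_Icc)).mono_set
        Ioc_subset_Icc_self) ?_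
  filter_upwards [hf.ae_hasDerivAt hab, hg.ae_hasDerivAt hab] with x hfx hgx hx
  exact (hfx hx).mul (hgx hx)

end

variable {f f' W w g : ℝ → ℂ} {a b : ℝ} {ρ : ℂ}

theorem exp (hf : IsACWithDerivOn f f' a b) (hab : a ≤ b) :
    IsACWithDerivOn (fun x ↦ Complex.exp (f x)) (fun t ↦ Complex.exp (f t) * f' t) a b := by
  refine of_ae_hasDerivAt hab
    ((Complex.contDiff_exp (𝕜 := ℂ)).locallyLipschitz.comp_absolutelyContinuousOnInterval
      (hf.absolutelyContinuousOnInterval hab))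
    ((((integrableOn_Icc_iff_integrableOn_Ioc).2 hf.1).continuousOn_mul
      (Complex.continuous_exp.comp_continuousOn (hf.continuousOn hab)) isCompact_Icc).mono_set
      Ioc_subset_Icc_self) ?_
  filter_upwards [hf.ae_hasDerivAt hab] with x hfx hx
  exact (hfx hx).cexp

theorem exp_neg_mul_eq (hW : IsACWithDerivOn W w a b) (hf : IsACWithDerivOn f f' a b)
    (hab : a ≤ b) (hode : f' =ᵐ[volume.restrict (Ioc a b)] fun t ↦ w t * f t + g t)
    {x : ℝ} (hx : x ∈ Icc a b) :
    Complex.exp (-W x) * f x =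
      Complex.exp (-W a) * f a + ∫ t in a..x, Complex.exp (-W t) * g t := by
  refine (((hW.neg.exp hab).mul hf hab).congr_ae ?_).2 x hx
  filter_upwards [hode] with t ht
  rw [ht]
  ring

theorem exp_mul_add_integral (hW : IsACWithDerivOn W w a b) (hg : IntegrableOn g (Ioc a b))
    (hab : a ≤ b) (c : ℂ) :
    IsACWithDerivOn (fun x ↦ Complex.exp (W x) * (c + ∫ t in a..x, Complex.exp (-W t) * g t))
      (fun t ↦ w t * (Complex.exp (W t) * (c + ∫ s in a..t, Complex.exp (-W s) * g s)) + g t)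
      a b := by
  have hexpg : IntegrableOn (fun t ↦ Complex.exp (-W t) * g t) (Ioc a b) :=
    (((integrableOn_Icc_iff_integrableOn_Ioc).2 hg).continuousOn_mul
      ((hW.neg.exp hab).continuousOn hab) isCompact_Icc).mono_set Ioc_subset_Icc_self
  refine ((hW.exp hab).mul ((isACWithDerivOn_intervalIntegral hexpg).const_add c) hab).congr_ae
    (ae_of_all _ fun t ↦ ?_)
  simp only [Complex.exp_neg]
  field_simp

theorem exp_mul_integral_add_eq_one (hW : IsACWithDerivOn W w a b) (hW0 : W a = 0)
    (hab : a ≤ b) (hf : IsACWithDerivOn f f' a b)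
    (hode : f' =ᵐ[volume.restrict (Ioc a b)] fun t ↦ w t * f t + f b * g t)
    (hbc : f a = ρ * f b) (hne : ∃ x ∈ Icc a b, f x ≠ 0) :
    Complex.exp (W b) * ((∫ t in a..b, Complex.exp (-W t) * g t) + ρ) = 1 := by
  have hsol {x : ℝ} (hx : x ∈ Icc a b) :
      Complex.exp (-W x) * f x = f a + f b * ∫ t in a..x, Complex.exp (-W t) * g t := by
    rw [hW.exp_neg_mul_eq hf hab hode hx, hW0, neg_zero, Complex.exp_zero, one_mul,
      ← intervalIntegral.integral_const_mul]
    congr 2 with t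
    ring
  obtain ⟨x₀, hx₀, hfx₀⟩ := hne
  have hfb : f b ≠ 0 := fun hfb ↦ hfx₀ <| by
    simpa [hbc, hfb, Complex.exp_ne_zero] using hsol hx₀
  have hb := hsol ⟨hab, le_rfl⟩
  rw [hbc] at hb
  have hexp : Complex.exp (W b) * Complex.exp (-W b) = 1 := by
    rw [← Complex.exp_add, add_neg_cancel, Complex.exp_zero]
  refine mul_left_cancel₀ hfb ?_
  linear_combination (-Complex.exp (W b)) * hb + f b * hexp

theorem exists_of_exp_mul_integral_add_eq_one (hW : IsACWithDerivOn W w a b) (hW0 : W a = 0)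
    (hab : a ≤ b) (hg : IntegrableOn g (Ioc a b))
    (h : Complex.exp (W b) * ((∫ t in a..b, Complex.exp (-W t) * g t) + ρ) = 1) :
    ∃ f, IsACWithDerivOn f (fun t ↦ w t * f t + g t) a b ∧ f a = ρ ∧ f b = 1 :=
  ⟨_, hW.exp_mul_add_integral hg hab ρ, by simp [hW0], by rw [← h, add_comm ρ]⟩

end IsACWithDerivOn

end

theorem MeasureTheory.MemLp.integrableOn_Ioc {E : Type*} [NormedAddCommGroup E] {f : ℝ → E}
    {p : ENNReal} {a b : ℝ} (hp : 1 ≤ p) (hf : MemLp f p (volume.restrict (Ioo a b))) :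
    IntegrableOn f (Ioc a b) :=
  have : IsFiniteMeasure (volume.restrict (Ioo a b)) :=
    isFiniteMeasure_restrict.2 measure_Ioo_lt_top.ne
  (integrableOn_Ioc_iff_integrableOn_Ioo).2 (hf.integrable hp)

/-- Theorem 3.1 (characterization of eigenvalues): `λ` is an eigenvalue of
`A_{ρ,k} f = if' + Vf + f(2π)k`, `f(0) = ρ f(2π)`, if and only if the transcendental
eigenvalue equation (3.4) holds. -/
theorem eigenvalue_iff_transcendental_equation
    (V k : ℝ → ℂ)
    (hV : MeasureTheory.MemLp V ⊤ (MeasureTheory.volume.restrict (Set.Ioo 0 (2 * Real.pi))))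
    (hk : MeasureTheory.MemLp k 2 (MeasureTheory.volume.restrict (Set.Ioo 0 (2 * Real.pi))))
    (ρ : ℂ) (lam : ℂ) :
    (∃ f f' : ℝ → ℂ, IsACWithDeriv f f' ∧
        (∃ x ∈ Set.Icc (0:ℝ) (2 * Real.pi), f x ≠ 0) ∧
        f 0 = ρ * f (2 * Real.pi) ∧
        ∀ᵐ x ∂(MeasureTheory.volume.restrict (Set.Ioo 0 (2 * Real.pi))),
          Complex.I * f' x + V x * f x + f (2 * Real.pi) * k x = lam * f x)
      ↔
    Complex.exp (Complex.I * ∫ t in (0:ℝ)..(2 * Real.pi), (V t - lam)) *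
        (Complex.I * (∫ t in (0:ℝ)..(2 * Real.pi),
            Complex.exp (-(Complex.I * ∫ s in (0:ℝ)..t, (V s - lam))) * k t) + ρ) = 1 := by
  have hT : 0 ≤ 2 * π := by positivity
  set W : ℝ → ℂ := fun x ↦ I * ∫ s in (0:ℝ)..x, (V s - lam)
  have hW : IsACWithDerivOn W (fun t ↦ I * (V t - lam)) 0 (2 * π) :=
    (isACWithDerivOn_intervalIntegral
      ((hV.integrableOn_Ioc le_top).sub (integrableOn_const measure_Ioc_lt_top.ne))).const_mul I
  have hW0 : W 0 = 0 := by simp [W]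
  have hIk : ∫ t in (0:ℝ)..(2 * π), exp (-W t) * (I * k t)
      = I * ∫ t in (0:ℝ)..(2 * π), exp (-W t) * k t := by
    rw [← intervalIntegral.integral_const_mul]
    congr 1 with t
    ring
  rw [← hIk]
  constructor
  · rintro ⟨f, f', hf, hne, hbc, hode⟩
    refine hW.exp_mul_integral_add_eq_one hW0 hT hf ?_ hbc hne
    rw [← Measure.restrict_congr_set Ioo_ae_eq_Ioc]
    filter_upwards [hode] with t ht
    linear_combination (-I) * ht + f' t * I_mul_I
  · intro h
    obtain ⟨f, hf, hf0, hf2π⟩ :=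
      hW.exists_of_exp_mul_integral_add_eq_one hW0 hT
        ((hk.integrableOn_Ioc one_le_two).const_mul I) h
    refine ⟨f, _, hf, ⟨2 * π, ⟨hT, le_rfl⟩, by simp [hf2π]⟩, by rw [hf0, hf2π, mul_one],
      ae_of_all _ fun t ↦ ?_⟩
    rw [hf2π]
    linear_combination ((V t - lam) * f t + k t) * I_mul_I
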